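/- J_P(x, z^a) ≥ J_P(x, y) and J_P(y, z^a) ≥ J_P(x, y) for the adversarial distribution z^a constructed from x, y at any index a in the common support. -/

import Mathlib

/-!
Write `m_k = max (x_k / x_a) (y_k / y_a)`. Since `x_j / x_a = (x_j / x_i) (x_i / x_a)`, and likewise
for `y`, we get `m_j ≤ max (x_j / x_i) (y_j / y_i) · m_i`: every coordinate ratio
`z^a_j / z^a_i = m_j / m_i` is dominated by the corresponding max-ratio of `x` and `y`. Replacing
`y` by `z^a` therefore shrinks each inner sum of `J_P(x, ·)` and so raises `J_P`; the bound for `y`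
follows from the symmetry of `J_P`.
-/

open Finset

open Classical in
/-- The probability Jaccard similarity of two nonnegative vectors. -/
noncomputable def JP {ι : Type*} [Fintype ι] (x y : ι → ℝ) : ℝ :=
  ∑ i ∈ Finset.univ.filter (fun i => 0 < x i ∧ 0 < y i),
    (∑ j, max (x j / x i) (y j / y i))⁻¹

section

variable {ι : Type*}

theorem max_div_le_max_div_mul_max_div {x y : ι → ℝ} (hx : ∀ i, 0 < x i) (hy : ∀ i, 0 < y i)
    (a i j : ι) :
    max (x j / x a) (y j / y a)
      ≤ max (x j / x i) (y j / y i) * max (x i / x a) (y i / y a) := by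
  rw [← div_mul_div_cancel₀ (a := x j) (c := x a) (hx i).ne',
    ← div_mul_div_cancel₀ (a := y j) (c := y a) (hy i).ne']
  have hM : 0 ≤ max (x j / x i) (y j / y i) := le_max_of_le_left (div_pos (hx j) (hx i)).le
  exact max_le
    (mul_le_mul (le_max_left _ _) (le_max_left _ _) (div_pos (hx i) (hx a)).le hM)
    (mul_le_mul (le_max_right _ _) (le_max_right _ _) (div_pos (hy i) (hy a)).le hM)

variable [Fintype ι]

theorem JP_comm (x y : ι → ℝ) : JP y x = JP x y := by
  unfold JP
  simp only [and_comm, max_comm]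

theorem JP_eq_sum_of_pos {x y : ι → ℝ} (hx : ∀ i, 0 < x i) (hy : ∀ i, 0 < y i) :
    JP x y = ∑ i, (∑ j, max (x j / x i) (y j / y i))⁻¹ := by
  unfold JP
  rw [filter_true_of_mem fun i _ => ⟨hx i, hy i⟩]

theorem JP_le_JP_of_div_le_max {x y z : ι → ℝ}
    (hx : ∀ i, 0 < x i) (hy : ∀ i, 0 < y i) (hz : ∀ i, 0 < z i)
    (h : ∀ i j, z j / z i ≤ max (x j / x i) (y j / y i)) :
    JP x y ≤ JP x z := by
  rw [JP_eq_sum_of_pos hx hy, JP_eq_sum_of_pos hx hz]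
  refine sum_le_sum fun i _ => inv_anti₀ ?_ ?_
  · exact sum_pos (fun j _ => lt_max_of_lt_left (div_pos (hx j) (hx i))) ⟨i, mem_univ i⟩
  · exact sum_le_sum fun j _ => max_le (le_max_left _ _) (h i j)

end

theorem JP_za_ge_general {n : ℕ} (x y : Fin n → ℝ)
    (hx : ∀ i, 0 < x i) (hy : ∀ i, 0 < y i) (a : Fin n) :
    JP x (fun i => max (x i / x a) (y i / y a) / ∑ k, max (x k / x a) (y k / y a))
      ≥ JP x y ∧
    JP y (fun i => max (x i / x a) (y i / y a) / ∑ k, max (x k / x a) (y k / y a))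
      ≥ JP x y := by
  set m : Fin n → ℝ := fun i => max (x i / x a) (y i / y a)
  have hm : ∀ i, 0 < m i := fun i => lt_max_of_lt_left (div_pos (hx i) (hx a))
  have hS : 0 < ∑ k, m k := sum_pos (fun k _ => hm k) ⟨a, mem_univ a⟩
  have hz : ∀ i, 0 < m i / ∑ k, m k := fun i => div_pos (hm i) hS
  have hratio : ∀ i j, (m j / ∑ k, m k) / (m i / ∑ k, m k) ≤ max (x j / x i) (y j / y i) :=
    fun i j => by
      rw [div_div_div_cancel_right₀ hS.ne', div_le_iff₀ (hm i)]
      exact max_div_le_max_div_mul_max_div hx hy a i j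
  refine ⟨JP_le_JP_of_div_le_max hx hy hz hratio, ?_⟩
  rw [← JP_comm x y]
  exact JP_le_JP_of_div_le_max hy hx hz fun i j => max_comm (x j / x i) _ ▸ hratio i j

/-- The adversarial distribution `z^a` is at least as close (in `J_P`) to each of `x` and
`y` as they are to each other. -/
theorem JP_za_ge {n : ℕ} (x y : Fin n → ℝ)
    (hx : ∀ i, 0 < x i) (hy : ∀ i, 0 < y i)
    (hxs : ∑ i, x i = 1) (hys : ∑ i, y i = 1) (a : Fin n) :
    JP x (fun i => max (x i / x a) (y i / y a) / ∑ k, max (x k / x a) (y k / y a))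
      ≥ JP x y ∧
    JP y (fun i => max (x i / x a) (y i / y a) / ∑ k, max (x k / x a) (y k / y a))
      ≥ JP x y :=
  JP_za_ge_general x y hx hy a
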